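/- For any real numbers r₁,…,r_k, consider the k×k real symmetric matrix M with entries M_{ij} = 2·(cosh rᵢ + cosh r_j − cosh(rᵢ − r_j) − 1)/(1 + cosh(rᵢ − r_j)). Then M is positive semidefinite; moreover, M is positive definite if and only if the rᵢ are pairwise distinct and all nonzero. (Equivalently, M_{ij} = 4·sinh(rᵢ/2)·sinh(r_j/2)/cosh((rᵢ − r_j)/2), and det M = 2^k·(∏ᵢ(e^{rᵢ} − 1))²·det(1/(e^{rᵢ} + e^{r_j}))_{i,j} ≥ 0.) -/

import Mathlib

/-!
Put `tᵢ = tanh (rᵢ / 2) ∈ (-1, 1)`. Then `M_{ij} = 4 tᵢ t_j / (1 - tᵢ t_j)`, which is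
`4 ∑_{n ≥ 1} (tᵢ t_j)ⁿ`, so the quadratic form of `M` is `4 ∑_{n ≥ 1} (∑ᵢ xᵢ tᵢⁿ)²`.
It vanishes exactly when all the moments `∑ᵢ xᵢ tᵢⁿ`, `n ≥ 1`, vanish, and by invertibility
of the Vandermonde matrix this forces `x = 0` precisely when the `tᵢ` are pairwise distinct
and nonzero.
-/

open Real Matrix

theorem eq_zero_of_forall_sum_mul_pow_succ_eq_zero {R ι : Type*} [CommRing R] [IsDomain R]
    [Fintype ι] {u x : ι → R} (hu : Function.Injective u) (hu₀ : ∀ i, u i ≠ 0)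
    (hx : ∀ n : ℕ, ∑ i, x i * u i ^ (n + 1) = 0) : x = 0 := by
  let e := Fintype.equivFin ι
  have hxu : (fun a => x (e.symm a) * u (e.symm a)) = 0 :=
    eq_zero_of_forall_pow_sum_mul_pow_eq_zero (hu.comp e.symm.injective) fun n => by
      simpa [pow_succ', mul_assoc, ← e.symm.sum_comp] using hx n
  funext i
  simpa [hu₀] using congrFun hxu (e i)

section GeomKernel

variable {ι : Type*} [Fintype ι]

noncomputable def geomKernel (u : ι → ℝ) : Matrix ι ι ℝ :=
  of fun i j => u i * u j / (1 - u i * u j)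

omit [Fintype ι] in
theorem geomKernel_isHermitian (u : ι → ℝ) : (geomKernel u).IsHermitian := by
  ext i j
  simp only [geomKernel, conjTranspose_apply, of_apply, star_trivial, mul_comm (u i)]

variable {u : ι → ℝ} (hu : ∀ i, |u i| < 1)
include hu

omit [Fintype ι] in
theorem hasSum_geomKernel_apply (i j : ι) :
    HasSum (fun n : ℕ => u i ^ (n + 1) * u j ^ (n + 1)) (geomKernel u i j) := by
  have hij : |u i * u j| < 1 := by
    rw [abs_mul]
    exact mul_lt_one_of_nonneg_of_lt_one_left (abs_nonneg _) (hu i) (hu j).le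
  have hterm : (fun n : ℕ => u i ^ (n + 1) * u j ^ (n + 1)) =
      fun n : ℕ => u i * u j * (u i * u j) ^ n := by
    funext n; ring
  rw [hterm]
  exact (hasSum_geometric_of_abs_lt_one hij).mul_left (u i * u j)

theorem hasSum_dotProduct_geomKernel_mulVec (x : ι → ℝ) :
    HasSum (fun n : ℕ => (∑ i, x i * u i ^ (n + 1)) ^ 2) (x ⬝ᵥ (geomKernel u *ᵥ x)) := by
  have hform : x ⬝ᵥ (geomKernel u *ᵥ x) = ∑ i, ∑ j, x i * x j * geomKernel u i j := by
    simp only [dotProduct, mulVec, Finset.mul_sum]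
    exact Finset.sum_congr rfl fun i _ => Finset.sum_congr rfl fun j _ => by ring
  have hterm (n : ℕ) : (∑ i, x i * u i ^ (n + 1)) ^ 2 =
      ∑ i, ∑ j, x i * x j * (u i ^ (n + 1) * u j ^ (n + 1)) := by
    rw [sq, Finset.sum_mul_sum]
    exact Finset.sum_congr rfl fun i _ => Finset.sum_congr rfl fun j _ => by ring
  rw [hform, funext hterm]
  exact hasSum_sum fun i _ => hasSum_sum fun j _ => (hasSum_geomKernel_apply hu i j).mul_left _

theorem geomKernel_posSemidef : (geomKernel u).PosSemidef :=
  .of_dotProduct_mulVec_nonneg (geomKernel_isHermitian u) fun x =>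
    (hasSum_dotProduct_geomKernel_mulVec hu x).nonneg fun _ => sq_nonneg _

theorem dotProduct_geomKernel_mulVec_pos_iff (x : ι → ℝ) :
    0 < x ⬝ᵥ (geomKernel u *ᵥ x) ↔ ∃ n : ℕ, ∑ i, x i * u i ^ (n + 1) ≠ 0 := by
  have hsum := hasSum_dotProduct_geomKernel_mulVec hu x
  have hnonneg (n : ℕ) : 0 ≤ (∑ i, x i * u i ^ (n + 1)) ^ 2 := sq_nonneg _
  have hzero :
      x ⬝ᵥ (geomKernel u *ᵥ x) = 0 ↔ ∀ n : ℕ, (∑ i, x i * u i ^ (n + 1)) ^ 2 = 0 :=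
    calc _ ↔ HasSum (fun n : ℕ => (∑ i, x i * u i ^ (n + 1)) ^ 2) 0 :=
          ⟨(· ▸ hsum), hsum.unique⟩
      _ ↔ _ := (hasSum_zero_iff_of_nonneg hnonneg).trans funext_iff
  rw [(hsum.nonneg hnonneg).lt_iff_ne', Ne, hzero]
  simp

theorem geomKernel_posDef_iff [DecidableEq ι] :
    (geomKernel u).PosDef ↔ Function.Injective u ∧ ∀ i, u i ≠ 0 := by
  refine ⟨fun hK => ?_, fun ⟨hinj, hu₀⟩ => ?_⟩
  · have moment_ne_zero {x : ι → ℝ} (hx : x ≠ 0) :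
        ∃ n : ℕ, ∑ i, x i * u i ^ (n + 1) ≠ 0 :=
      (dotProduct_geomKernel_mulVec_pos_iff hu x).1
        (by simpa using hK.dotProduct_mulVec_pos hx)
    refine ⟨fun i j hij => by_contra fun hne => ?_, fun i hi => ?_⟩
    · have hx : (Pi.single i 1 - Pi.single j 1 : ι → ℝ) ≠ 0 :=
        fun h => by simpa [hne] using congrFun h i
      obtain ⟨n, hn⟩ := moment_ne_zero hx
      simp [Pi.single_apply, sub_mul, Finset.sum_sub_distrib, hij] at hn
    · obtain ⟨n, hn⟩ :=
        moment_ne_zero (Pi.single_ne_zero_iff.2 one_ne_zero : Pi.single i (1 : ℝ) ≠ 0)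
      simp [Pi.single_apply, hi] at hn
  · refine .of_dotProduct_mulVec_pos (geomKernel_isHermitian u) fun x hx => ?_
    rw [star_trivial, dotProduct_geomKernel_mulVec_pos_iff hu]
    by_contra! h
    exact hx (eq_zero_of_forall_sum_mul_pow_succ_eq_zero hinj hu₀ h)

end GeomKernel

theorem cosh_pairing_eq_tanh_half (a b : ℝ) :
    2 * (cosh a + cosh b - cosh (a - b) - 1) / (1 + cosh (a - b)) =
      4 * (tanh (a / 2) * tanh (b / 2) / (1 - tanh (a / 2) * tanh (b / 2))) := by
  obtain ⟨s, rfl⟩ : ∃ s, a = 2 * s := ⟨a / 2, by ring⟩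
  obtain ⟨t, rfl⟩ : ∃ t, b = 2 * t := ⟨b / 2, by ring⟩
  have exp_two_mul (z : ℝ) : exp (2 * z) = exp z ^ 2 := by rw [sq, ← exp_add, two_mul]
  have hs := exp_pos s
  have ht := exp_pos t
  simp only [mul_div_cancel_left₀ _ (two_ne_zero' ℝ), tanh_eq_sinh_div_cosh, sinh_eq, cosh_eq,
    ← mul_sub, ← mul_neg, exp_two_mul, exp_neg, exp_sub]
  field_simp
  have hden : (exp s ^ 2 + 1) * (exp t ^ 2 + 1) - (exp s ^ 2 - 1) * (exp t ^ 2 - 1) ≠ 0 := by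
    ring_nf; positivity
  rw [eq_div_iff hden]
  ring

/-- For any real numbers `r₁, …, r_k`, the `k × k` matrix with entries
`M_{ij} = 2(cosh rᵢ + cosh r_j − cosh(rᵢ − r_j) − 1)/(1 + cosh(rᵢ − r_j))` is positive
semidefinite, and it is positive definite if and only if the `rᵢ` are pairwise distinct
and all nonzero. -/
theorem hyperbolic_pairing_posSemidef {k : ℕ} (r : Fin k → ℝ)
    (M : Matrix (Fin k) (Fin k) ℝ)
    (hM : ∀ i j, M i j =
      2 * (Real.cosh (r i) + Real.cosh (r j) - Real.cosh (r i - r j) - 1) /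
        (1 + Real.cosh (r i - r j))) :
    M.PosSemidef ∧ (M.PosDef ↔ Function.Injective r ∧ ∀ i, r i ≠ 0) := by
  have htanh_half : Function.Injective fun x : ℝ => tanh (x / 2) :=
    tanh_injective.comp fun a b h => by simpa using h
  set t : Fin k → ℝ := (fun x => tanh (x / 2)) ∘ r
  have ht : ∀ i, |t i| < 1 := fun i => abs_tanh_lt_one _
  obtain rfl : M = (4 : ℝ) • geomKernel t := by
    ext i j
    rw [hM, cosh_pairing_eq_tanh_half]
    rfl
  have hposDef_smul : ((4 : ℝ) • geomKernel t).PosDef ↔ (geomKernel t).PosDef :=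
    ⟨fun h => by simpa [smul_smul] using h.smul (inv_pos.2 (four_pos : (0 : ℝ) < 4)),
      fun h => h.smul four_pos⟩
  refine ⟨(geomKernel_posSemidef ht).smul zero_le_four, ?_⟩
  rw [hposDef_smul, geomKernel_posDef_iff ht]
  exact and_congr (htanh_half.of_comp_iff r)
    (forall_congr' fun i => (htanh_half.eq_iff' (by simp)).not)
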